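/- Define G : Z⟨a,b⟩ → Z⟨a,b⟩ by G(w) = φ(w)·b + Σ φ(w_(1))·b·λ̄(w_(2))·(a−b). Then for any ab-polynomial w, G(w·a) = (1/2)·φ(w·ab). -/

import Mathlib

open scoped TensorProduct
open scoped Classical

noncomputable section

abbrev Alg : Type := MonoidAlgebra ℤ (FreeMonoid Bool)

def va : Alg := MonoidAlgebra.of ℤ (FreeMonoid Bool) (FreeMonoid.of false)
def vb : Alg := MonoidAlgebra.of ℤ (FreeMonoid Bool) (FreeMonoid.of true)

def monoOf (l : List Bool) : Alg := MonoidAlgebra.of ℤ (FreeMonoid Bool) (FreeMonoid.ofList l)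

def toF (x : Alg) : FreeMonoid Bool →₀ ℤ := x.coeff

/-- The weight of a chain encoded as a strictly increasing map `f : Fin (k+1) → P`. -/
def wtChain {P : Type} (ρ : P → ℕ) {k : ℕ} (f : Fin (k+1) → P) : Alg :=
  (List.ofFn (fun i : Fin k =>
    (va - vb) ^ (ρ (f i.succ) - ρ (f i.castSucc) - 1) *
      (if (i : ℕ) + 1 < k then vb else 1))).prod

def zetaChain {P : Type} (zb : P → P → ℤ) {k : ℕ} (f : Fin (k+1) → P) : ℤ :=
  ∏ i : Fin k, zb (f i.castSucc) (f i.succ)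

/-- The ab-index of the interval `[lo, hi]` of a quasi-graded poset `(P, ρ, zb)`. -/
def PsiI {P : Type} [Fintype P] [PartialOrder P] (ρ : P → ℕ) (zb : P → P → ℤ)
    (lo hi : P) : Alg :=
  ∑ k ∈ Finset.range (Fintype.card P + 1),
    ∑ f : Fin (k+1) → P,
      if StrictMono f ∧ f 0 = lo ∧ f (Fin.last k) = hi
      then zetaChain zb f • wtChain ρ f else 0

/-- The algebra map `κ` with `κ(a) = a - b`, `κ(b) = 0`. -/
def kappa : Alg →ₐ[ℤ] Alg :=
  MonoidAlgebra.lift ℤ Alg (FreeMonoid Bool)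
    (FreeMonoid.lift (fun s => if s then 0 else va - vb))

/-- The algebra map `λ̄` with `λ̄(a) = 0`, `λ̄(b) = a - b`. -/
def lambdabar : Alg →ₐ[ℤ] Alg :=
  MonoidAlgebra.lift ℤ Alg (FreeMonoid Bool)
    (FreeMonoid.lift (fun s => if s then va - vb else 0))

/-- `η` on monomials: `b^m a^k ↦ 2 (a-b)^(m+k)`, other monomials to `0`. -/
def etaMon (w : FreeMonoid Bool) : Alg :=
  if ∃ m k : ℕ, FreeMonoid.toList w = List.replicate m true ++ List.replicate k false
  then (2 : ℤ) • (va - vb) ^ (FreeMonoid.toList w).length else 0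

def etaOp (x : Alg) : Alg := (toF x).sum fun w c => c • etaMon w

/-- The letter-deletion coproduct on `Z⟨a,b⟩`. -/
def Delta (x : Alg) : Alg ⊗[ℤ] Alg :=
  (toF x).sum fun w c => c •
    ∑ i ∈ Finset.range (FreeMonoid.toList w).length,
      monoOf ((FreeMonoid.toList w).take i) ⊗ₜ[ℤ] monoOf ((FreeMonoid.toList w).drop (i+1))

/-- The Sweedler-style convolution `x ↦ Σ F(x₍₁₎) · b · G(x₍₂₎)`. -/
def sweedler (F G : Alg → Alg) (x : Alg) : Alg :=
  (toF x).sum fun w c => c •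
    ∑ i ∈ Finset.range (FreeMonoid.toList w).length,
      F (monoOf ((FreeMonoid.toList w).take i)) * vb *
        G (monoOf ((FreeMonoid.toList w).drop (i+1)))

/-- `phiAux n = φ_{n+1}`, defined by `φ₁ = κ` and `φ_{k+1}(w) = Σ φ_k(w₍₁₎) · b · η(w₍₂₎)`. -/
def phiAux : ℕ → Alg → Alg
  | 0 => fun x => kappa x
  | (n+1) => fun x => sweedler (phiAux n) etaOp x

def maxLen (x : Alg) : ℕ := (toF x).support.sup fun w => (FreeMonoid.toList w).length

/-- The operator `φ = Σ_{k ≥ 1} φ_k` (the sum is finite on any given polynomial). -/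
def phi (x : Alg) : Alg := ∑ k ∈ Finset.range (maxLen x + 1), phiAux k x

/-- `ω` on a monomial: replace each occurrence of `ab` by `2d` and remaining letters by `c`. -/
def omegaList : List Bool → Alg
  | [] => 1
  | false :: true :: rest => ((2:ℤ) • (va * vb + vb * va)) * omegaList rest
  | _ :: rest => (va + vb) * omegaList rest

def omegaOp (x : Alg) : Alg := (toF x).sum fun w c => c • omegaList (FreeMonoid.toList w)

/-- The operator `G(w) = φ(w)·b + Σ φ(w₍₁₎)·b·λ̄(w₍₂₎)·(a-b)`. -/
def Gop (w : Alg) : Alg := phi w * vb + sweedler phi (fun y => lambdabar y) w * (va - vb)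

/-- The reversal map `u ↦ u*` reading each monomial backwards. -/
def revOp (x : Alg) : Alg :=
  (toF x).sum fun w c =>
    MonoidAlgebra.single (FreeMonoid.ofList (FreeMonoid.toList w).reverse) c

/-- `H'` deletes the last letter of each monomial, `H'(1) = 0`. -/
def Hp (x : Alg) : Alg :=
  (toF x).sum fun w c => if w = 1 then 0 else c • monoOf ((FreeMonoid.toList w).dropLast)

end

/-! In `φ_{k+1}(u·ab) = Σ φ_k(u₍₁₎)·b·η(u₍₂₎)` only the deletions of the final `a` and of the
final `b` survive, since every other right factor still ends in `ab` and is killed by `η`; they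
contribute `2·φ_k(u·a)·b` and `2·φ_k(u)·b·(a-b)`, while `φ₁(u·ab) = κ(u·ab) = 0`. In the same way
`λ̄` kills every term of the Sweedler sum in `G(u·a)` but the deletion of the final `a`, so
`G(u·a) = φ(u·a)·b + φ(u)·b·(a-b)`. Both sides are additive in `w`; for `φ` this holds because
`φ_n` vanishes on words shorter than `n`, so the truncation of `φ x` at `maxLen x` is harmless. -/

lemma monoOf_append (l₁ l₂ : List Bool) : monoOf (l₁ ++ l₂) = monoOf l₁ * monoOf l₂ :=
  map_mul (MonoidAlgebra.of ℤ (FreeMonoid Bool)) (FreeMonoid.ofList l₁) (FreeMonoid.ofList l₂)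

lemma monoOf_nil : monoOf [] = 1 := rfl

lemma va_eq_monoOf : va = monoOf [false] := rfl

lemma vb_eq_monoOf : vb = monoOf [true] := rfl

lemma of_eq_monoOf_toList (w : FreeMonoid Bool) :
    MonoidAlgebra.of ℤ (FreeMonoid Bool) w = monoOf (FreeMonoid.toList w) := by
  rw [monoOf, FreeMonoid.ofList_toList]

lemma toF_monoOf (l : List Bool) : toF (monoOf l) = Finsupp.single (FreeMonoid.ofList l) 1 := rfl

lemma maxLen_monoOf (l : List Bool) : maxLen (monoOf l) = l.length := by
  rw [maxLen, toF_monoOf, Finsupp.support_single _ one_ne_zero, Finset.sup_singleton,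
    FreeMonoid.toList_ofList]

lemma length_le_maxLen {x : Alg} {w : FreeMonoid Bool} (hw : w ∈ (toF x).support) :
    (FreeMonoid.toList w).length ≤ maxLen x :=
  Finset.le_sup (f := fun w => (FreeMonoid.toList w).length) hw

lemma kappa_monoOf_append_b (l : List Bool) : kappa (monoOf (l ++ [true])) = 0 := by
  rw [monoOf_append, map_mul, ← vb_eq_monoOf, vb, MonoidAlgebra.of_apply, kappa,
    MonoidAlgebra.lift_single, FreeMonoid.lift_eval_of, if_pos rfl, smul_zero, mul_zero]

lemma lambdabar_monoOf_append_a (l : List Bool) : lambdabar (monoOf (l ++ [false])) = 0 := by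
  rw [monoOf_append, map_mul, ← va_eq_monoOf, va, MonoidAlgebra.of_apply, lambdabar,
    MonoidAlgebra.lift_single, FreeMonoid.lift_eval_of, if_neg Bool.false_ne_true, smul_zero,
    mul_zero]

lemma etaOp_monoOf (l : List Bool) : etaOp (monoOf l) = etaMon (FreeMonoid.ofList l) := by
  rw [etaOp, toF_monoOf, Finsupp.sum_single_index (by rw [zero_smul]), one_smul]

lemma etaMon_nil : etaMon (FreeMonoid.ofList []) = (2 : ℤ) • 1 := by
  rw [etaMon, FreeMonoid.toList_ofList, if_pos ⟨0, 0, rfl⟩]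
  simp

lemma etaMon_b : etaMon (FreeMonoid.ofList [true]) = (2 : ℤ) • (va - vb) := by
  rw [etaMon, FreeMonoid.toList_ofList, if_pos ⟨1, 0, rfl⟩]
  simp

lemma etaMon_append_ab (l : List Bool) : etaMon (FreeMonoid.ofList (l ++ [false, true])) = 0 := by
  rw [etaMon, FreeMonoid.toList_ofList, if_neg]
  rintro ⟨m, k, h⟩
  cases k with
  | zero =>
    rw [List.replicate_zero, List.append_nil] at h
    have hfalse : false ∈ List.replicate m true := h ▸ by simp
    simpa using List.eq_of_mem_replicate hfalse
  | succ k => simpa [List.replicate_succ'] using congrArg List.getLast? h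

section Sweedler

variable (F G : Alg → Alg)

lemma sweedler_add (x y : Alg) : sweedler F G (x + y) = sweedler F G x + sweedler F G y :=
  Finsupp.sum_add_index' (fun _ => zero_smul ℤ _) (fun _ _ _ => add_smul _ _ _)

lemma sweedler_monoOf (l : List Bool) :
    sweedler F G (monoOf l) =
      ∑ i ∈ Finset.range l.length, F (monoOf (l.take i)) * vb * G (monoOf (l.drop (i + 1))) := by
  rw [sweedler, toF_monoOf, Finsupp.sum_single_index (by rw [zero_smul]), one_smul,
    FreeMonoid.toList_ofList]

end Sweedler

lemma phiAux_add (n : ℕ) (x y : Alg) : phiAux n (x + y) = phiAux n x + phiAux n y := by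
  cases n with
  | zero => exact map_add kappa x y
  | succ n => exact sweedler_add _ _ x y

lemma phiAux_eq_zero_of_maxLen_lt {n : ℕ} {x : Alg} (h : maxLen x < n) : phiAux n x = 0 := by
  induction n generalizing x with
  | zero => omega
  | succ n ih =>
    refine Finset.sum_eq_zero fun w hw =>
      smul_eq_zero_of_right _ <| Finset.sum_eq_zero fun i hi => ?_
    have hlen := length_le_maxLen hw
    have hi := Finset.mem_range.mp hi
    rw [ih (by rw [maxLen_monoOf, List.length_take_of_le hi.le]; omega), zero_mul, zero_mul]

lemma phi_eq_sum_range {x : Alg} {N : ℕ} (h : maxLen x < N) :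
    phi x = ∑ k ∈ Finset.range N, phiAux k x :=
  Finset.sum_subset (Finset.range_subset_range.mpr h) fun _ _ hk =>
    phiAux_eq_zero_of_maxLen_lt (by simpa using hk)

lemma phi_add (x y : Alg) : phi (x + y) = phi x + phi y := by
  set N := max (maxLen x) (max (maxLen y) (maxLen (x + y))) + 1
  rw [phi_eq_sum_range (x := x + y) (N := N) (by omega),
    phi_eq_sum_range (x := x) (N := N) (by omega), phi_eq_sum_range (x := y) (N := N) (by omega),
    ← Finset.sum_add_distrib]
  exact Finset.sum_congr rfl fun k _ => phiAux_add k x y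

lemma phi_zsmul (r : ℤ) (x : Alg) : phi (r • x) = r • phi x :=
  map_zsmul (AddMonoidHom.mk' phi phi_add) r x

lemma Gop_add (x y : Alg) : Gop (x + y) = Gop x + Gop y := by
  rw [Gop, Gop, Gop, phi_add, sweedler_add, add_mul, add_mul]
  abel

lemma Gop_zsmul (r : ℤ) (x : Alg) : Gop (r • x) = r • Gop x :=
  map_zsmul (AddMonoidHom.mk' Gop Gop_add) r x

lemma phiAux_succ_monoOf_append_ab (n : ℕ) (l : List Bool) :
    phiAux (n + 1) (monoOf (l ++ [false, true])) =
      (2 : ℤ) • (phiAux n (monoOf (l ++ [false])) * vb) +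
        (2 : ℤ) • (phiAux n (monoOf l) * vb * (va - vb)) := by
  have hinner : ∀ i ∈ Finset.range l.length,
      phiAux n (monoOf ((l ++ [false, true]).take i)) * vb *
        etaOp (monoOf ((l ++ [false, true]).drop (i + 1))) = 0 := fun i hi => by
    rw [List.drop_append_of_le_length (Finset.mem_range.mp hi), etaOp_monoOf, etaMon_append_ab,
      mul_zero]
  change sweedler (phiAux n) etaOp _ = _
  rw [sweedler_monoOf, List.length_append, show [false, true].length = 1 + 1 from rfl,
    ← add_assoc, Finset.sum_range_succ, Finset.sum_range_succ,
    Finset.sum_eq_zero hinner, zero_add]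
  have htake₁ : (l ++ [false, true]).take l.length = l := List.take_left
  have hdrop₁ : (l ++ [false, true]).drop (l.length + 1) = [true] :=
    List.drop_length_add_append 1
  have htake₂ : (l ++ [false, true]).take (l.length + 1) = l ++ [false] :=
    List.take_length_add_append 1
  have hdrop₂ : (l ++ [false, true]).drop (l.length + 1 + 1) = [] :=
    List.drop_eq_nil_of_le (by simp)
  rw [htake₁, hdrop₁, htake₂, hdrop₂, etaOp_monoOf, etaOp_monoOf, etaMon_b, etaMon_nil,
    mul_smul_comm, mul_smul_comm, mul_one, add_comm]

lemma Gop_monoOf_append_a (l : List Bool) :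
    Gop (monoOf (l ++ [false])) =
      phi (monoOf (l ++ [false])) * vb + phi (monoOf l) * vb * (va - vb) := by
  have hinner : ∀ i ∈ Finset.range l.length, phi (monoOf ((l ++ [false]).take i)) * vb *
      lambdabar (monoOf ((l ++ [false]).drop (i + 1))) = 0 := fun i hi => by
    rw [List.drop_append_of_le_length (Finset.mem_range.mp hi), lambdabar_monoOf_append_a,
      mul_zero]
  rw [Gop, sweedler_monoOf, List.length_append, List.length_singleton, Finset.sum_range_succ,
    Finset.sum_eq_zero hinner, zero_add]
  simp [monoOf_nil]

lemma phi_monoOf_append_ab (l : List Bool) :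
    phi (monoOf (l ++ [false, true])) =
      (2 : ℤ) • (phi (monoOf (l ++ [false])) * vb + phi (monoOf l) * vb * (va - vb)) := by
  have hkappa : phiAux 0 (monoOf (l ++ [false, true])) = 0 := by
    rw [show l ++ [false, true] = (l ++ [false]) ++ [true] by simp]
    exact kappa_monoOf_append_b _
  rw [phi_eq_sum_range (N := l.length + 2 + 1) (by simp [maxLen_monoOf]),
    phi_eq_sum_range (x := monoOf (l ++ [false])) (N := l.length + 2) (by simp [maxLen_monoOf]),
    phi_eq_sum_range (x := monoOf l) (N := l.length + 2) (by simp [maxLen_monoOf]),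
    Finset.sum_range_succ', hkappa, add_zero]
  simp only [phiAux_succ_monoOf_append_ab, Finset.sum_add_distrib, ← Finset.smul_sum,
    ← Finset.sum_mul, smul_add]

/-- `G(w·a) = (1/2)·φ(w·ab)`, stated integrally as `2·G(w·a) = φ(w·ab)`. -/
theorem G_mul_a (w : Alg) : (2 : ℤ) • Gop (w * va) = phi (w * (va * vb)) := by
  induction w using MonoidAlgebra.induction_on with
  | of g =>
    rw [of_eq_monoOf_toList, va_eq_monoOf, vb_eq_monoOf, ← monoOf_append, ← monoOf_append,
      ← monoOf_append, List.singleton_append, Gop_monoOf_append_a, phi_monoOf_append_ab]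
  | add x y hx hy => rw [add_mul, add_mul, Gop_add, phi_add, smul_add, hx, hy]
  | smul r x hx =>
    rw [smul_mul_assoc, smul_mul_assoc, Gop_zsmul, phi_zsmul, ← hx, smul_comm]
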